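/- Let S ⊆ ℝᵏ and Ṡ ⊆ ℝᵏ, let 𝒜, ℬ₁, ℬ₂, 𝒞₁, 𝒟₁₁, 𝒟₁₂, 𝒞₂ be continuous matrix-valued functions of s ∈ ℝᵏ (of conformable dimensions), let P : ℝᵏ → (symmetric n×n real matrices) be differentiable with P(s) positive semidefinite for all s ∈ S, let M be a fixed symmetric matrix, λ ≥ 0, and σ > 0. Assume that for all (s, ρ) ∈ S × Ṡ the symmetric block matrix [[P(s)𝒜(s) + 𝒜(s)ᵀP(s) + ∂P(s,ρ), P(s)ℬ₁(s), P(s)ℬ₂(s)], [ℬ₁(s)ᵀP(s), 0, 0], [ℬ₂(s)ᵀP(s), 0, −I]] + λ[𝒞₁(s) 𝒟₁₁(s) 𝒟₁₂(s)]ᵀM[𝒞₁(s) 𝒟₁₁(s) 𝒟₁₂(s)] is negative semidefinite, where ∂P(s,ρ) = Σⱼ (∂P/∂sⱼ)(s)·ρⱼ, and that for all s ∈ S the block matrix [[P(s), 𝒞₂(s)ᵀ], [𝒞₂(s), σ²·I]] is positive definite. Let s : [0,∞) → ℝᵏ be differentiable with s(t) ∈ S and s′(t) ∈ Ṡ for all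 t, let q, η be continuous vector-valued functions on [0,∞), and let χ be continuously differentiable with χ(0) = 0 and χ′(t) = 𝒜(s(t))χ(t) + ℬ₁(s(t))q(t) + ℬ₂(s(t))η(t) for all t ≥ 0. Define r(t) = 𝒞₁(s(t))χ(t) + 𝒟₁₁(s(t))q(t) + 𝒟₁₂(s(t))η(t) and z(t) = 𝒞₂(s(t))χ(t), and assume the hard IQC condition ∫₀ᵀ r(τ)ᵀ M r(τ) dτ ≥ 0 for every T ≥ 0. Then for every T ≥ 0, ‖z(T)‖² ≤ σ² ∫₀ᵀ ‖η(τ)‖² dτ; in particular, if ∫₀^∞ ‖η(τ)‖² dτ < ∞, then sup_{t ≥ 0} ‖z(t)‖ ≤ σ · (∫₀^∞ ‖η(τ)‖² dτ)^{1/2}. -/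

import Mathlib

/-!
`V(t) = χ(t)ᵀ P(s(t)) χ(t)` is a storage function. Testing the dissipation LMI against
`(χ, q, η)` gives `V' ≤ ‖η‖² - λ rᵀ M r`; integrating from `V(0) = 0` and using the hard IQC
yields `V(T) ≤ ∫₀ᵀ ‖η‖²`. Testing the Schur-complement condition against `(σ² χ, -𝒞₂ χ)` gives
`‖z‖² ≤ σ² V`.
-/

open Matrix Set MeasureTheory

theorem hasDerivAt_comp_eq_sum_partial {ι : Type*} [Fintype ι] [DecidableEq ι]
    {f : (ι → ℝ) → ℝ} {s : ℝ → ι → ℝ} {s' : ι → ℝ} {t : ℝ}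
    (hf : DifferentiableAt ℝ f (s t)) (hs : HasDerivAt s s' t) :
    HasDerivAt (fun u => f (s u)) (∑ l, fderiv ℝ f (s t) (Pi.single l 1) * s' l) t := by
  have hsum : ∑ l, fderiv ℝ f (s t) (Pi.single l 1) * s' l = fderiv ℝ f (s t) s' := by
    conv_rhs => rw [pi_eq_sum_univ' s']
    simp [mul_comm]
  rw [hsum]
  exact hf.hasFDerivAt.comp_hasDerivAt t hs

theorem HasDerivAt.dotProduct {m : Type*} [Fintype m] {x y : ℝ → m → ℝ} {x' y' : m → ℝ}
    {t : ℝ} (hx : HasDerivAt x x' t) (hy : HasDerivAt y y' t) :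
    HasDerivAt (fun u => x u ⬝ᵥ y u) (x' ⬝ᵥ y t + x t ⬝ᵥ y') t := by
  show HasDerivAt (fun u => ∑ i, x u i * y u i) (∑ i, x' i * y t i + ∑ i, x t i * y' i) t
  rw [← Finset.sum_add_distrib]
  exact HasDerivAt.fun_sum (u := Finset.univ) fun i _ =>
      (hasDerivAt_pi.1 hx i).fun_mul (hasDerivAt_pi.1 hy i)

theorem HasDerivAt.mulVec {m n : Type*} [Fintype m] [Fintype n] {Q : ℝ → Matrix m n ℝ}
    {Q' : Matrix m n ℝ} {x : ℝ → n → ℝ} {x' : n → ℝ} {t : ℝ}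
    (hQ : ∀ i j, HasDerivAt (fun u => Q u i j) (Q' i j) t) (hx : HasDerivAt x x' t) :
    HasDerivAt (fun u => Q u *ᵥ x u) (Q' *ᵥ x t + Q t *ᵥ x') t :=
  hasDerivAt_pi.2 fun i => (hasDerivAt_pi.2 (hQ i)).dotProduct hx

theorem dotProduct_mulVec_self_le_of_posSemidef_fromBlocks {m p : Type*} [Fintype m] [Fintype p]
    [DecidableEq p] {Q : Matrix m m ℝ} {C : Matrix p m ℝ} {c : ℝ} (hc : 0 < c)
    (h : (fromBlocks Q Cᵀ C (c • 1)).PosSemidef) (x : m → ℝ) :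
    (C *ᵥ x) ⬝ᵥ (C *ᵥ x) ≤ c * (x ⬝ᵥ (Q *ᵥ x)) := by
  have := h.dotProduct_mulVec_nonneg (Sum.elim (c • x) (-(C *ᵥ x)))
  simp only [star_trivial, fromBlocks_mulVec, sumElim_dotProduct_sumElim, Sum.elim_comp_inl,
    Sum.elim_comp_inr, mulVec_smul, smul_mulVec, one_mulVec, mulVec_neg, dotProduct_add,
    dotProduct_smul, smul_dotProduct, neg_dotProduct, dotProduct_neg, smul_eq_mul] at this
  rw [dotProduct_mulVec x Cᵀ, vecMul_transpose] at this
  nlinarith [dotProduct_comm (C *ᵥ x) (C *ᵥ x)]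

theorem le_integral_of_hasDerivAt_le_supply {V V' w ρ : ℝ → ℝ} {T lam : ℝ} (hT : 0 ≤ T)
    (hlam : 0 ≤ lam) (hV : ∀ t ∈ Icc 0 T, HasDerivAt V (V' t) t) (hV0 : V 0 = 0)
    (hw : IntervalIntegrable w volume 0 T)
    (hρ : IntervalIntegrable ρ volume 0 T) (hρ_nonneg : 0 ≤ ∫ t in 0..T, ρ t)
    (hV' : ∀ t ∈ Ioo 0 T, V' t ≤ w t - lam * ρ t) :
    V T ≤ ∫ t in 0..T, w t := by
  have := intervalIntegral.sub_le_integral_of_hasDeriv_right_of_le hT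
    (fun t ht => (hV t ht).continuousAt.continuousWithinAt)
    (fun t ht => (hV t (Ioo_subset_Icc_self ht)).hasDerivWithinAt)
    ((intervalIntegrable_iff_integrableOn_Icc_of_le hT).1 (hw.sub (hρ.const_mul lam))) hV'
  rw [hV0, sub_zero, intervalIntegral.integral_sub hw (hρ.const_mul lam),
    intervalIntegral.integral_const_mul] at this
  nlinarith [mul_nonneg hlam hρ_nonneg]

section Dissipation

variable {m p e o : Type*} [Fintype m] [Fintype p] [Fintype e] [Fintype o] [DecidableEq e]

def dissipationMatrix (Q dQ A : Matrix m m ℝ) (B₁ : Matrix m p ℝ) (B₂ : Matrix m e ℝ)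
    (C₁ : Matrix o m ℝ) (D₁₁ : Matrix o p ℝ) (D₁₂ : Matrix o e ℝ) (M : Matrix o o ℝ) (lam : ℝ) :
    Matrix (m ⊕ p ⊕ e) (m ⊕ p ⊕ e) ℝ :=
  fromBlocks (Q * A + Aᵀ * Q + dQ) (fromCols (Q * B₁) (Q * B₂)) (fromRows (B₁ᵀ * Q) (B₂ᵀ * Q))
      (fromBlocks 0 0 0 (-1))
    + lam • ((fromCols C₁ (fromCols D₁₁ D₁₂))ᵀ * M * fromCols C₁ (fromCols D₁₁ D₁₂))

theorem dotProduct_dissipationMatrix_mulVec (Q dQ A : Matrix m m ℝ) (B₁ : Matrix m p ℝ)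
    (B₂ : Matrix m e ℝ) (C₁ : Matrix o m ℝ) (D₁₁ : Matrix o p ℝ) (D₁₂ : Matrix o e ℝ)
    (M : Matrix o o ℝ) (lam : ℝ) (x : m → ℝ) (q : p → ℝ) (w : e → ℝ) :
    Sum.elim x (Sum.elim q w) ⬝ᵥ
        (dissipationMatrix Q dQ A B₁ B₂ C₁ D₁₁ D₁₂ M lam *ᵥ Sum.elim x (Sum.elim q w)) =
      (A *ᵥ x + B₁ *ᵥ q + B₂ *ᵥ w) ⬝ᵥ (Q *ᵥ x)
        + x ⬝ᵥ (dQ *ᵥ x + Q *ᵥ (A *ᵥ x + B₁ *ᵥ q + B₂ *ᵥ w))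
        + lam * ((C₁ *ᵥ x + D₁₁ *ᵥ q + D₁₂ *ᵥ w) ⬝ᵥ (M *ᵥ (C₁ *ᵥ x + D₁₁ *ᵥ q + D₁₂ *ᵥ w)))
        - w ⬝ᵥ w := by
  simp only [dissipationMatrix, add_mulVec, smul_mulVec, dotProduct_add, add_dotProduct,
    dotProduct_smul, smul_eq_mul, fromBlocks_mulVec, fromCols_mulVec_sumElim, fromRows_mulVec,
    sumElim_dotProduct_sumElim, ← mulVec_mulVec, dotProduct_transpose_mulVec, mulVec_add,
    zero_mulVec, neg_mulVec, one_mulVec, add_zero, zero_add, dotProduct_neg, dotProduct_zero,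
    Sum.elim_comp_inl, Sum.elim_comp_inr]
  simp only [dotProduct_comm (Q *ᵥ x), dotProduct_comm (M *ᵥ _)]
  ring

theorem le_supply_of_posSemidef_neg_dissipationMatrix {Q dQ A : Matrix m m ℝ}
    {B₁ : Matrix m p ℝ} {B₂ : Matrix m e ℝ} {C₁ : Matrix o m ℝ} {D₁₁ : Matrix o p ℝ}
    {D₁₂ : Matrix o e ℝ} {M : Matrix o o ℝ} {lam : ℝ}
    (h : (-dissipationMatrix Q dQ A B₁ B₂ C₁ D₁₁ D₁₂ M lam).PosSemidef)
    (x : m → ℝ) (q : p → ℝ) (w : e → ℝ) :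
    (A *ᵥ x + B₁ *ᵥ q + B₂ *ᵥ w) ⬝ᵥ (Q *ᵥ x)
        + x ⬝ᵥ (dQ *ᵥ x + Q *ᵥ (A *ᵥ x + B₁ *ᵥ q + B₂ *ᵥ w))
      ≤ w ⬝ᵥ w
        - lam * ((C₁ *ᵥ x + D₁₁ *ᵥ q + D₁₂ *ᵥ w) ⬝ᵥ (M *ᵥ (C₁ *ᵥ x + D₁₁ *ᵥ q + D₁₂ *ᵥ w))) := by
  have := h.dotProduct_mulVec_nonneg (Sum.elim x (Sum.elim q w))
  rw [star_trivial, neg_mulVec, dotProduct_neg, dotProduct_dissipationMatrix_mulVec] at this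
  linarith

end Dissipation

theorem worst_case_SSE_general {k n nq nη nr nz : ℕ}
    (S Sdot : Set (Fin k → ℝ))
    (A : (Fin k → ℝ) → Matrix (Fin n) (Fin n) ℝ)
    (B₁ : (Fin k → ℝ) → Matrix (Fin n) (Fin nq) ℝ)
    (B₂ : (Fin k → ℝ) → Matrix (Fin n) (Fin nη) ℝ)
    (C₁ : (Fin k → ℝ) → Matrix (Fin nr) (Fin n) ℝ)
    (D₁₁ : (Fin k → ℝ) → Matrix (Fin nr) (Fin nq) ℝ)
    (D₁₂ : (Fin k → ℝ) → Matrix (Fin nr) (Fin nη) ℝ)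
    (C₂ : (Fin k → ℝ) → Matrix (Fin nz) (Fin n) ℝ)
    (hC₁c : Continuous C₁) (hD₁₁c : Continuous D₁₁) (hD₁₂c : Continuous D₁₂)
    (P : (Fin k → ℝ) → Matrix (Fin n) (Fin n) ℝ)
    (hPdiff : ∀ i j, Differentiable ℝ (fun u => P u i j))
    (dP : (Fin k → ℝ) → (Fin k → ℝ) → Matrix (Fin n) (Fin n) ℝ)
    (hdP : ∀ s ρ i j,
      dP s ρ i j = ∑ l, fderiv ℝ (fun u => P u i j) s (Pi.single l 1) * ρ l)
    (M : Matrix (Fin nr) (Fin nr) ℝ)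
    (lam σ : ℝ) (hlam : 0 ≤ lam) (hσ : 0 < σ)
    (hLMI : ∀ s ∈ S, ∀ ρ ∈ Sdot,
      (-(Matrix.fromBlocks
          (P s * A s + (A s)ᵀ * P s + dP s ρ)
          (Matrix.fromCols (P s * B₁ s) (P s * B₂ s))
          (Matrix.fromRows ((B₁ s)ᵀ * P s) ((B₂ s)ᵀ * P s))
          (Matrix.fromBlocks 0 0 0 (-(1 : Matrix (Fin nη) (Fin nη) ℝ)))
        + lam •
            ((Matrix.fromCols (C₁ s) (Matrix.fromCols (D₁₁ s) (D₁₂ s)))ᵀ * M *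
              (Matrix.fromCols (C₁ s) (Matrix.fromCols (D₁₁ s) (D₁₂ s)))))).PosSemidef)
    (hSchur : ∀ s ∈ S,
      (Matrix.fromBlocks (P s) (C₂ s)ᵀ (C₂ s)
        (σ ^ 2 • (1 : Matrix (Fin nz) (Fin nz) ℝ))).PosDef)
    (s : ℝ → Fin k → ℝ) (s' : ℝ → Fin k → ℝ)
    (hs : ∀ t, 0 ≤ t → HasDerivAt s (s' t) t)
    (hsS : ∀ t, 0 ≤ t → s t ∈ S) (hs'S : ∀ t, 0 ≤ t → s' t ∈ Sdot)
    (q : ℝ → Fin nq → ℝ) (η : ℝ → Fin nη → ℝ) (hq : Continuous q) (hη : Continuous η)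
    (χ : ℝ → Fin n → ℝ) (hχ0 : χ 0 = 0)
    (hχ : ∀ t, 0 ≤ t →
      HasDerivAt χ (A (s t) *ᵥ χ t + B₁ (s t) *ᵥ q t + B₂ (s t) *ᵥ η t) t)
    (r : ℝ → Fin nr → ℝ)
    (hr : ∀ t, r t = C₁ (s t) *ᵥ χ t + D₁₁ (s t) *ᵥ q t + D₁₂ (s t) *ᵥ η t)
    (z : ℝ → Fin nz → ℝ)
    (hz : ∀ t, z t = C₂ (s t) *ᵥ χ t)
    (hIQC : ∀ T, 0 ≤ T → 0 ≤ ∫ τ in (0:ℝ)..T, r τ ⬝ᵥ (M *ᵥ r τ)) :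
    (∀ T, 0 ≤ T →
      z T ⬝ᵥ z T ≤ σ ^ 2 * ∫ τ in (0:ℝ)..T, η τ ⬝ᵥ η τ) ∧
    (MeasureTheory.IntegrableOn (fun τ => η τ ⬝ᵥ η τ) (Set.Ioi (0:ℝ)) →
      ∀ t, 0 ≤ t →
        Real.sqrt (z t ⬝ᵥ z t) ≤ σ * Real.sqrt (∫ τ in Set.Ioi (0:ℝ), η τ ⬝ᵥ η τ)) := by
  have hV : ∀ t, 0 ≤ t → HasDerivAt (fun u => χ u ⬝ᵥ (P (s u) *ᵥ χ u))
      ((A (s t) *ᵥ χ t + B₁ (s t) *ᵥ q t + B₂ (s t) *ᵥ η t) ⬝ᵥ (P (s t) *ᵥ χ t)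
        + χ t ⬝ᵥ (dP (s t) (s' t) *ᵥ χ t
          + P (s t) *ᵥ (A (s t) *ᵥ χ t + B₁ (s t) *ᵥ q t + B₂ (s t) *ᵥ η t))) t := fun t ht =>
    (hχ t ht).dotProduct <| HasDerivAt.mulVec (fun i j => by
      simpa only [← hdP] using hasDerivAt_comp_eq_sum_partial (hPdiff i j _) (hs t ht)) (hχ t ht)
  have hrc : ContinuousOn (fun t => r t ⬝ᵥ (M *ᵥ r t)) (Ici 0) := by
    have hsc : ContinuousOn s (Ici 0) := fun t ht => (hs t ht).continuousAt.continuousWithinAt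
    have hχc : ContinuousOn χ (Ici 0) := fun t ht => (hχ t ht).continuousAt.continuousWithinAt
    simp only [hr]
    fun_prop
  have hstorage : ∀ T, 0 ≤ T → χ T ⬝ᵥ (P (s T) *ᵥ χ T) ≤ ∫ τ in (0:ℝ)..T, η τ ⬝ᵥ η τ :=
    fun T hT => le_integral_of_hasDerivAt_le_supply hT hlam (fun t ht => hV t ht.1)
      (by simp [hχ0]) ((hη.dotProduct hη).intervalIntegrable 0 T)
      ((hrc.mono (by simp [uIcc_of_le hT, Icc_subset_Ici_self])).intervalIntegrable) (hIQC T hT)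
      fun t ht => by
        rw [hr t]
        exact le_supply_of_posSemidef_neg_dissipationMatrix
          (hLMI _ (hsS t ht.1.le) _ (hs'S t ht.1.le)) _ _ _
  have hbound : ∀ T, 0 ≤ T → z T ⬝ᵥ z T ≤ σ ^ 2 * ∫ τ in (0:ℝ)..T, η τ ⬝ᵥ η τ := fun T hT => by
    rw [hz]
    calc _ ≤ σ ^ 2 * (χ T ⬝ᵥ (P (s T) *ᵥ χ T)) :=
          dotProduct_mulVec_self_le_of_posSemidef_fromBlocks (by positivity)
            (hSchur _ (hsS T hT)).posSemidef _
      _ ≤ _ := by gcongr; exact hstorage T hT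
  refine ⟨hbound, fun hInt t ht => ?_⟩
  have hmono : ∫ τ in (0:ℝ)..t, η τ ⬝ᵥ η τ ≤ ∫ τ in Ioi (0:ℝ), η τ ⬝ᵥ η τ := by
    rw [intervalIntegral.integral_of_le ht]
    exact setIntegral_mono_set hInt
      (.of_forall fun τ => dotProduct_self_star_nonneg (η τ)) Ioc_subset_Ioi_self.eventuallyLE
  calc √(z t ⬝ᵥ z t) ≤ √(σ ^ 2 * ∫ τ in Ioi (0:ℝ), η τ ⬝ᵥ η τ) :=
        Real.sqrt_le_sqrt ((hbound t ht).trans (mul_le_mul_of_nonneg_left hmono (sq_nonneg σ)))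
    _ = σ * √(∫ τ in Ioi (0:ℝ), η τ ⬝ᵥ η τ) := by
        rw [Real.sqrt_mul (sq_nonneg σ), Real.sqrt_sq hσ.le]

/-- Worst-case SSE theorem: if the parameter-dependent dissipation LMI (without performance
term) holds on `S × Ṡ` with positive semidefinite `P(s)`, the Schur-complement condition
`[[P(s), C₂(s)ᵀ], [C₂(s), σ²I]] ≻ 0` holds on `S`, and the IQC output `r` satisfies the
hard IQC, then the output `z = C₂χ` of the extended LPV error system with zero initial state
satisfies `‖z(T)‖² ≤ σ² ∫₀ᵀ ‖η‖²` for all `T ≥ 0`; in particular, if `‖η‖² ∈ L¹(0,∞)`,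
then `‖z(t)‖ ≤ σ (∫₀^∞ ‖η‖²)^{1/2}` for all `t ≥ 0`. -/
theorem worst_case_SSE {k n nq nη nr nz : ℕ}
    (S Sdot : Set (Fin k → ℝ))
    (A : (Fin k → ℝ) → Matrix (Fin n) (Fin n) ℝ)
    (B₁ : (Fin k → ℝ) → Matrix (Fin n) (Fin nq) ℝ)
    (B₂ : (Fin k → ℝ) → Matrix (Fin n) (Fin nη) ℝ)
    (C₁ : (Fin k → ℝ) → Matrix (Fin nr) (Fin n) ℝ)
    (D₁₁ : (Fin k → ℝ) → Matrix (Fin nr) (Fin nq) ℝ)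
    (D₁₂ : (Fin k → ℝ) → Matrix (Fin nr) (Fin nη) ℝ)
    (C₂ : (Fin k → ℝ) → Matrix (Fin nz) (Fin n) ℝ)
    (hAc : Continuous A) (hB₁c : Continuous B₁) (hB₂c : Continuous B₂)
    (hC₁c : Continuous C₁) (hD₁₁c : Continuous D₁₁) (hD₁₂c : Continuous D₁₂)
    (hC₂c : Continuous C₂)
    (P : (Fin k → ℝ) → Matrix (Fin n) (Fin n) ℝ)
    (hPdiff : ∀ i j, Differentiable ℝ (fun u => P u i j))
    (hPsymm : ∀ u, (P u).IsSymm)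
    (hPpos : ∀ s ∈ S, (P s).PosSemidef)
    (dP : (Fin k → ℝ) → (Fin k → ℝ) → Matrix (Fin n) (Fin n) ℝ)
    (hdP : ∀ s ρ i j,
      dP s ρ i j = ∑ l, fderiv ℝ (fun u => P u i j) s (Pi.single l 1) * ρ l)
    (M : Matrix (Fin nr) (Fin nr) ℝ) (hM : M.IsSymm)
    (lam σ : ℝ) (hlam : 0 ≤ lam) (hσ : 0 < σ)
    (hLMI : ∀ s ∈ S, ∀ ρ ∈ Sdot,
      (-(Matrix.fromBlocks
          (P s * A s + (A s)ᵀ * P s + dP s ρ)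
          (Matrix.fromCols (P s * B₁ s) (P s * B₂ s))
          (Matrix.fromRows ((B₁ s)ᵀ * P s) ((B₂ s)ᵀ * P s))
          (Matrix.fromBlocks 0 0 0 (-(1 : Matrix (Fin nη) (Fin nη) ℝ)))
        + lam •
            ((Matrix.fromCols (C₁ s) (Matrix.fromCols (D₁₁ s) (D₁₂ s)))ᵀ * M *
              (Matrix.fromCols (C₁ s) (Matrix.fromCols (D₁₁ s) (D₁₂ s)))))).PosSemidef)
    (hSchur : ∀ s ∈ S,
      (Matrix.fromBlocks (P s) (C₂ s)ᵀ (C₂ s)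
        (σ ^ 2 • (1 : Matrix (Fin nz) (Fin nz) ℝ))).PosDef)
    (s : ℝ → Fin k → ℝ) (s' : ℝ → Fin k → ℝ)
    (hs : ∀ t, 0 ≤ t → HasDerivAt s (s' t) t)
    (hsS : ∀ t, 0 ≤ t → s t ∈ S) (hs'S : ∀ t, 0 ≤ t → s' t ∈ Sdot)
    (q : ℝ → Fin nq → ℝ) (η : ℝ → Fin nη → ℝ) (hq : Continuous q) (hη : Continuous η)
    (χ : ℝ → Fin n → ℝ) (hχ0 : χ 0 = 0)
    (hχ : ∀ t, 0 ≤ t →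
      HasDerivAt χ (A (s t) *ᵥ χ t + B₁ (s t) *ᵥ q t + B₂ (s t) *ᵥ η t) t)
    (hχc : Continuous χ)
    (r : ℝ → Fin nr → ℝ)
    (hr : ∀ t, r t = C₁ (s t) *ᵥ χ t + D₁₁ (s t) *ᵥ q t + D₁₂ (s t) *ᵥ η t)
    (z : ℝ → Fin nz → ℝ)
    (hz : ∀ t, z t = C₂ (s t) *ᵥ χ t)
    (hIQC : ∀ T, 0 ≤ T → 0 ≤ ∫ τ in (0:ℝ)..T, r τ ⬝ᵥ (M *ᵥ r τ)) :
    (∀ T, 0 ≤ T →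
      z T ⬝ᵥ z T ≤ σ ^ 2 * ∫ τ in (0:ℝ)..T, η τ ⬝ᵥ η τ) ∧
    (MeasureTheory.IntegrableOn (fun τ => η τ ⬝ᵥ η τ) (Set.Ioi (0:ℝ)) →
      ∀ t, 0 ≤ t →
        Real.sqrt (z t ⬝ᵥ z t) ≤ σ * Real.sqrt (∫ τ in Set.Ioi (0:ℝ), η τ ⬝ᵥ η τ)) :=
  worst_case_SSE_general S Sdot A B₁ B₂ C₁ D₁₁ D₁₂ C₂ hC₁c hD₁₁c hD₁₂c P hPdiff dP hdP M lam σ hlam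
    hσ hLMI hSchur s s' hs hsS hs'S q η hq hη χ hχ0 hχ r hr z hz hIQC
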